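/- arXiv:2404.17927 — 4 statements merged into one kernel-verified Lean document; each statement's English description precedes it below -/
import Mathlib

section
/- Let G be a balanced bipartite graph with color classes V+ and V-. If G has a perfect matching M such that the auxiliary digraph G_M (obtained by orienting all edges of G from V+ to V- and adding the reverse orientation of every matching edge) is strongly connected, then for every perfect matching M' of G, the auxiliary digraph G_{M'} is strongly connected. -/
open Sum

/-- Arc relation of the auxiliary digraph `G_M`: every edge of `E` oriented from `V⁺` to `V⁻`,
plus the reverse orientation of every edge of the matching `M`. -/
def Step {α β : Type*} (E M : Set (α × β)) : (α ⊕ β) → (α ⊕ β) → Prop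
  | inl a, inr b => (a, b) ∈ E
  | inr b, inl a => (a, b) ∈ M
  | _, _ => False

/-- A digraph (given by its arc relation) is strongly connected if every vertex is
reachable from every vertex. -/
def StronglyConnected {V : Type*} (R : V → V → Prop) : Prop :=
  ∀ u v : V, Relation.ReflTransGen R u v

/-- `M` is a perfect matching of the bipartite graph with color classes `α`, `β`
and edge set `E`. -/
def IsPerfectMatching {α β : Type*} (E M : Set (α × β)) : Prop :=
  M ⊆ E ∧ (∀ a : α, ∃! b : β, (a, b) ∈ M) ∧ (∀ b : β, ∃! a : α, (a, b) ∈ M)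

theorem stmt0 {α β : Type*} [Fintype α] [Fintype β]
    (hbal : Fintype.card α = Fintype.card β)
    (E M : Set (α × β)) (hM : IsPerfectMatching E M)
    (hSC : StronglyConnected (Step E M)) :
    ∀ M' : Set (α × β), IsPerfectMatching E M' → StronglyConnected (Step E M') := by
  intro M' hM'
  obtain ⟨hME, hA, hB⟩ := hM
  obtain ⟨hM'E, hA', hB'⟩ := hM'
  choose mA hmA huA using hA
  choose mB hmB huB using hB
  choose mA' hmA' huA' using hA'
  choose mB' hmB' huB' using hB'
  set π : α → α := fun a => mB' (mA a) with hπ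
  have hπinj : Function.Injective π := by
    intro a₁ a₂ h
    have h1 : mA a₁ = mA a₂ := by
      have e1 := hmB' (mA a₁)
      have e2 := hmB' (mA a₂)
      rw [show mB' (mA a₁) = mB' (mA a₂) from h] at e1
      calc mA a₁ = mA' (mB' (mA a₂)) := huA' _ _ e1
        _ = mA a₂ := (huA' _ _ e2).symm
    have e1 : (a₁, mA a₂) ∈ M := h1 ▸ hmA a₁
    calc a₁ = mB (mA a₂) := huB _ _ e1
      _ = a₂ := (huB _ _ (hmA a₂)).symm
  have hπbij := Finite.injective_iff_bijective.mp hπinj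
  set e : Equiv.Perm α := Equiv.ofBijective π hπbij with he
  have heapp : ∀ a, e a = π a := fun a => rfl
  set R' := Step E M' with hR'
  have L1 : ∀ a : α, Relation.ReflTransGen R' (inl a) (inl (π a)) := by
    intro a
    exact Relation.ReflTransGen.head (b := inr (mA a)) (hME (hmA a))
      (Relation.ReflTransGen.single (hmB' (mA a)))
  have L2 : ∀ (k : ℕ) (a : α), Relation.ReflTransGen R' (inl a) (inl ((e ^ k) a)) := by
    intro k
    induction k with
    | zero => intro a; exact Relation.ReflTransGen.refl
    | succ n ih =>
      intro a
      have h' : (e ^ (n + 1)) a = (e ^ n) (π a) := by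
        rw [pow_succ]; rfl
      rw [h']
      exact (L1 a).trans (ih (π a))
  have L3 : ∀ a : α, Relation.ReflTransGen R' (inl (π a)) (inl a) := by
    intro a
    have hn : orderOf e ≠ 0 := (orderOf_pos e).ne'
    have h2 := L2 (orderOf e - 1) (π a)
    have key : (e ^ (orderOf e - 1)) (π a) = a := by
      have h3 : (e ^ (orderOf e - 1)) (e a) = (e ^ orderOf e) a := by
        conv_rhs => rw [← Nat.succ_pred_eq_of_ne_zero hn]
        rw [pow_succ]; rfl
      rw [show π a = e a from (heapp a).symm, h3, pow_orderOf_eq_one]; rfl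
    rwa [key] at h2
  have sim : ∀ u v, Step E M u v → Relation.ReflTransGen R' u v := by
    intro u v huv
    match u, v with
    | inl a, inr b => exact Relation.ReflTransGen.single huv
    | inr b, inl a =>
      have hb : mA a = b := (huA a b huv).symm
      have step1 : Relation.ReflTransGen R' (inr b) (inl (mB' b)) :=
        Relation.ReflTransGen.single (hmB' b)
      have hπa : π a = mB' b := by rw [hπ]; simp [hb]
      exact step1.trans (hπa ▸ L3 a)
  intro u v
  induction hSC u v with
  | refl => exact Relation.ReflTransGen.refl
  | tail h1 h2 ih => exact ih.trans (sim _ _ h2)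
end

section
/- Let T be a spanning tree of a balanced bipartite graph G = (V+, V-; E). Then the following are equivalent: (1) T contains a perfect matching M of G such that the digraph obtained by orienting the edges of T \ M from V+ to V- and the edges of M from V- to V+ is a spanning in-arborescence of the auxiliary digraph G_M; (2) there exists a vertex r ∈ V+ with degree 1 in T such that every other vertex of V+ has degree exactly 2 in T. -/
/-!
Every `b ∈ V⁻` has an outgoing `M`-arc, so the root of the arborescence is some `r ∈ V⁺`. Each
`a ∈ V⁺` has one `M`-edge and, in `T \ M`, one out-arc if `a ≠ r` and none if `a = r`: hence the
degrees `1` and `2`. Conversely, orient the tree towards `r` and match every `b ∈ V⁻` to its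
parent; the `M`-arcs are then exactly the arcs leaving `V⁻`. The `T`-edges at `a ∈ V⁺` are the
edge to its parent (if `a ≠ r`) and the `M`-edges to its children, so the degree condition says
precisely that every `a` has exactly one child, i.e. that `M` is perfect.
-/

open Sum

/-- The simple graph on `α ⊕ β` determined by an edge set `T ⊆ α × β`. -/
def sg {α β : Type*} (T : Set (α × β)) : SimpleGraph (α ⊕ β) :=
  SimpleGraph.fromRel (fun u v => ∃ a b, u = inl a ∧ v = inr b ∧ (a, b) ∈ T)

/-- Degree of `a ∈ V⁺` in the edge set `T`. -/
noncomputable def degP {α β : Type*} (T : Set (α × β)) (a : α) : ℕ :=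
  {b : β | (a, b) ∈ T}.ncard

def auxArcs {α β : Type*} (E M : Set (α × β)) : Set ((α ⊕ β) × (α ⊕ β)) :=
  {p | Step E M p.1 p.2}

def WeaklyConnected {V : Type*} (B : Set (V × V)) : Prop :=
  ∀ u v : V, Relation.ReflTransGen (fun x y => (x, y) ∈ B ∨ (y, x) ∈ B) u v

/-- `B` is a spanning in-arborescence rooted at `r`. -/
def IsInArb {V : Type*} (B : Set (V × V)) (r : V) : Prop :=
  WeaklyConnected B ∧ (¬ ∃ w, (r, w) ∈ B) ∧ ∀ v : V, v ≠ r → ∃! w, (v, w) ∈ B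

namespace SimpleGraph.IsTree

variable {V : Type*} {G : SimpleGraph V} (hG : G.IsTree) (ρ : V)

noncomputable def rootPath (v : V) : G.Walk v ρ :=
  (hG.existsUnique_path v ρ).choose

theorem isPath_rootPath (v : V) : (hG.rootPath ρ v).IsPath :=
  (hG.existsUnique_path v ρ).choose_spec.1

variable {ρ} in
theorem eq_rootPath {v : V} {p : G.Walk v ρ} (hp : p.IsPath) : p = hG.rootPath ρ v :=
  (hG.existsUnique_path v ρ).unique hp (hG.isPath_rootPath ρ v)

noncomputable def parent (v : V) : V :=
  (hG.rootPath ρ v).getVert 1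

variable {ρ}

theorem parent_self : hG.parent ρ ρ = ρ := by
  rw [parent, ← hG.eq_rootPath Walk.IsPath.nil]
  rfl

theorem parent_eq_of_rootPath_eq_cons {v w : V} {h : G.Adj v w} {q : G.Walk w ρ}
    (hq : hG.rootPath ρ v = .cons h q) : hG.parent ρ v = w := by
  simp only [parent, hq, Walk.getVert_cons_succ, Walk.getVert_zero]

theorem parent_eq_of_adj_of_notMem {u v : V} (h : G.Adj v u)
    (hv : v ∉ (hG.rootPath ρ u).support) : hG.parent ρ v = u :=
  hG.parent_eq_of_rootPath_eq_cons
    (hG.eq_rootPath ((hG.isPath_rootPath ρ u).cons hv (h := h))).symm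

theorem rootPath_eq_cons {v : V} (hv : v ≠ ρ) :
    ∃ h : G.Adj v (hG.parent ρ v),
      hG.rootPath ρ v = .cons h (hG.rootPath ρ (hG.parent ρ v)) := by
  obtain ⟨w, h, q, hq⟩ := Walk.exists_eq_cons_of_ne hv (hG.rootPath ρ v)
  have hqp : q.IsPath := by
    have := hG.isPath_rootPath ρ v
    rw [hq] at this
    exact this.of_cons
  obtain rfl := hG.parent_eq_of_rootPath_eq_cons hq
  exact ⟨h, hq.trans (by rw [hG.eq_rootPath hqp])⟩

theorem adj_parent {v : V} (hv : v ≠ ρ) : G.Adj v (hG.parent ρ v) :=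
  (hG.rootPath_eq_cons hv).1

theorem parent_parent_ne {v : V} (hv : v ≠ ρ) : hG.parent ρ (hG.parent ρ v) ≠ v := by
  obtain ⟨h, he⟩ := hG.rootPath_eq_cons hv
  have hnot := hG.isPath_rootPath ρ v
  rw [he, Walk.cons_isPath_iff] at hnot
  intro heq
  have hmem : hG.parent ρ (hG.parent ρ v) ∈ (hG.rootPath ρ (hG.parent ρ v)).support :=
    Walk.getVert_mem_support _ 1
  rw [heq] at hmem
  exact hnot.2 hmem

theorem parent_eq_of_adj_of_mem {u v : V} (h : G.Adj u v)
    (hv : v ∈ (hG.rootPath ρ u).support) : hG.parent ρ u = v := by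
  classical
  have htake : (hG.rootPath ρ u).takeUntil v hv = .cons h .nil := by
    have hedge : (Walk.cons h .nil : G.Walk u v).IsPath := by simpa using h.ne
    exact (hG.existsUnique_path u v).unique ((hG.isPath_rootPath ρ u).takeUntil hv) hedge
  have hsplit := (hG.rootPath ρ u).take_spec hv
  rw [htake, Walk.cons_append, Walk.nil_append] at hsplit
  exact hG.parent_eq_of_rootPath_eq_cons hsplit.symm

theorem parent_eq_or_parent_eq {u v : V} (h : G.Adj u v) :
    hG.parent ρ u = v ∨ hG.parent ρ v = u := by
  by_cases hv : v ∈ (hG.rootPath ρ u).support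
  · exact .inl (hG.parent_eq_of_adj_of_mem h hv)
  · exact .inr (hG.parent_eq_of_adj_of_notMem h.symm hv)

theorem reflTransGen_parent (v : V) :
    Relation.ReflTransGen (fun x y => x ≠ ρ ∧ hG.parent ρ x = y) v ρ := by
  induction hn : (hG.rootPath ρ v).length using Nat.strong_induction_on generalizing v with
  | _ n ih =>
    by_cases hv : v = ρ
    · exact hv ▸ .refl
    obtain ⟨h, he⟩ := hG.rootPath_eq_cons hv
    refine .head ⟨hv, rfl⟩ (ih _ ?_ _ rfl)
    rw [← hn, he, Walk.length_cons]
    exact Nat.lt_succ_self _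

theorem ne_of_adj_of_parent_eq {u v : V} (h : G.Adj u v) (hu : hG.parent ρ u = v) : u ≠ ρ := by
  rintro rfl
  exact h.ne (by rw [← hu, hG.parent_self])

theorem parent_eq_iff_parent_ne {u v : V} (h : G.Adj u v) :
    hG.parent ρ u = v ↔ hG.parent ρ v ≠ u := by
  refine ⟨fun hu hv => ?_, (hG.parent_eq_or_parent_eq h).resolve_right⟩
  exact hG.parent_parent_ne (hG.ne_of_adj_of_parent_eq h hu) (hu ▸ hv)

theorem adj_and_parent_eq_iff {u v : V} :
    G.Adj u v ∧ hG.parent ρ u = v ↔ u ≠ ρ ∧ hG.parent ρ u = v :=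
  ⟨fun ⟨h, hu⟩ => ⟨hG.ne_of_adj_of_parent_eq h hu, hu⟩,
    fun ⟨hu, hv⟩ => ⟨hv ▸ hG.adj_parent hu, hv⟩⟩

variable (ρ) in
theorem isInArb_parentArcs : IsInArb {e : V × V | e.1 ≠ ρ ∧ hG.parent ρ e.1 = e.2} ρ := by
  refine ⟨fun u v => ?_, fun ⟨_, hw⟩ => hw.1 rfl,
    fun v hv => ⟨hG.parent ρ v, ⟨hv, rfl⟩, fun _ hw => hw.2.symm⟩⟩
  exact (Relation.ReflTransGen.mono (fun _ _ h => .inl h) _ _ (hG.reflTransGen_parent u)).trans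
    (Relation.ReflTransGen.mono (fun _ _ h => .inr h) _ _
      (Relation.ReflTransGen.swap _ _ (hG.reflTransGen_parent v)))

end SimpleGraph.IsTree

section Bipartite

variable {α β : Type*} {E M T : Set (α × β)}

@[simp]
theorem sg_adj_inl_inr {a : α} {b : β} :
    (sg T).Adj (inl a) (inr b) ↔ (a, b) ∈ T := by
  simp [sg]

@[simp]
theorem sg_adj_inr_inl {a : α} {b : β} :
    (sg T).Adj (inr b) (inl a) ↔ (a, b) ∈ T := by
  simp [sg]

@[simp]
theorem not_sg_adj_inl_inl {a a' : α} : ¬(sg T).Adj (inl a) (inl a') := by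
  simp [sg]

@[simp]
theorem not_sg_adj_inr_inr {b b' : β} : ¬(sg T).Adj (inr b) (inr b') := by
  simp [sg]

@[simp]
theorem inl_inr_mem_auxArcs {a : α} {b : β} : (inl a, inr b) ∈ auxArcs E M ↔ (a, b) ∈ E :=
  Iff.rfl

@[simp]
theorem inr_inl_mem_auxArcs {a : α} {b : β} : (inr b, inl a) ∈ auxArcs E M ↔ (a, b) ∈ M :=
  Iff.rfl

@[simp]
theorem inl_inl_notMem_auxArcs {a a' : α} : (inl a, inl a') ∉ auxArcs (β := β) E M :=
  id

@[simp]
theorem inr_inr_notMem_auxArcs {b b' : β} : (inr b, inr b') ∉ auxArcs (α := α) E M :=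
  id

theorem auxArcs_subset_auxArcs {E' : Set (α × β)} (h : E ⊆ E') :
    auxArcs E M ⊆ auxArcs E' M := by
  rintro ⟨a | b, a' | b'⟩ hab <;> first | exact h hab | exact hab

theorem existsUnique_inl_mem_auxArcs {a : α} :
    (∃! w, (inl a, w) ∈ auxArcs E M) ↔ ∃! b, (a, b) ∈ E := by
  constructor
  · rintro ⟨_ | b, hb, hu⟩
    · exact (inl_inl_notMem_auxArcs hb).elim
    · exact ⟨b, hb, fun b' hb' => inr_injective (hu (inr b') hb')⟩
  · rintro ⟨b, hb, hu⟩
    refine ⟨inr b, hb, ?_⟩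
    rintro (_ | b') hb'
    · exact (inl_inl_notMem_auxArcs hb').elim
    · exact congrArg inr (hu b' hb')

theorem exists_eq_inl_of_isInArb {ρ : α ⊕ β} (hM : ∀ b, ∃ a, (a, b) ∈ M)
    (harb : IsInArb (auxArcs E M) ρ) : ∃ r, ρ = inl r := by
  rcases ρ with r | b
  · exact ⟨r, rfl⟩
  · obtain ⟨a, ha⟩ := hM b
    exact (harb.2.1 ⟨inl a, ha⟩).elim

theorem degP_eq_one_iff {a : α} : degP E a = 1 ↔ ∃! b, (a, b) ∈ E := by
  simp only [degP, Set.ncard_eq_one, Set.eq_singleton_iff_unique_mem]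
  rfl

theorem degP_eq_of_forall_notMem_sdiff (hMT : M ⊆ T) {a : α} (h : ∀ b, (a, b) ∉ T \ M) :
    degP T a = degP M a := by
  simp only [degP]
  congr 1
  ext b
  exact ⟨fun hb => by_contra fun hbM => h b ⟨hb, hbM⟩, fun hb => hMT hb⟩

theorem degP_eq_two_iff_of_existsUnique_sdiff (hMT : M ⊆ T) {a : α}
    (h : ∃! b, (a, b) ∈ T \ M) : degP T a = 2 ↔ degP M a = 1 := by
  obtain ⟨b₀, hb₀, hu⟩ := h
  have hT : {b | (a, b) ∈ T} = insert b₀ {b | (a, b) ∈ M} := by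
    ext b
    refine ⟨fun hb => ?_, ?_⟩
    · by_cases hbM : (a, b) ∈ M
      · exact .inr hbM
      · exact .inl (hu b ⟨hb, hbM⟩)
    · rintro (rfl | hb)
      exacts [hb₀.1, hMT hb]
  by_cases hfin : {b | (a, b) ∈ M}.Finite
  · simp only [degP, hT, Set.ncard_insert_of_notMem (s := {b | (a, b) ∈ M}) hb₀.2 hfin]
    omega
  · simp only [degP, hT, (Set.Infinite.mono (Set.subset_insert _ _) hfin).ncard,
      Set.Infinite.ncard hfin]
    omega

theorem forall_existsUnique_iff_degP {r : α} (hMT : M ⊆ T)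
    (harb : IsInArb (auxArcs (T \ M) M) (inl r)) :
    (∀ a, ∃! b, (a, b) ∈ M) ↔ degP T r = 1 ∧ ∀ a, a ≠ r → degP T a = 2 := by
  have hroot : degP T r = degP M r :=
    degP_eq_of_forall_notMem_sdiff hMT fun b hb => harb.2.1 ⟨inr b, hb⟩
  have hout (a : α) (ha : a ≠ r) : ∃! b, (a, b) ∈ T \ M :=
    existsUnique_inl_mem_auxArcs.1 (harb.2.2 (inl a) (inl_injective.ne ha))
  simp only [hroot, degP_eq_one_iff]
  refine ⟨fun h => ⟨h r, fun a ha => ?_⟩, fun ⟨hr, h⟩ a => ?_⟩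
  · exact (degP_eq_two_iff_of_existsUnique_sdiff hMT (hout a ha)).2 (degP_eq_one_iff.2 (h a))
  · by_cases ha : a = r
    · exact ha ▸ hr
    · exact degP_eq_one_iff.1 ((degP_eq_two_iff_of_existsUnique_sdiff hMT (hout a ha)).1 (h a ha))

end Bipartite

section ParentMatching

variable {α β : Type*} {T : Set (α × β)} (htree : (sg T).IsTree) (ρ : α ⊕ β)

def parentMatching : Set (α × β) :=
  {e | e ∈ T ∧ htree.parent ρ (inr e.2) = inl e.1}

theorem mem_parentMatching {a : α} {b : β} :
    (a, b) ∈ parentMatching htree ρ ↔ (a, b) ∈ T ∧ htree.parent ρ (inr b) = inl a :=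
  Iff.rfl

theorem parentMatching_subset : parentMatching htree ρ ⊆ T :=
  fun _ he => he.1

theorem auxArcs_parentMatching :
    auxArcs (T \ parentMatching htree ρ) (parentMatching htree ρ) =
      {e | e.1 ≠ ρ ∧ htree.parent ρ e.1 = e.2} := by
  ext ⟨x, y⟩
  simp only [Set.mem_ofPred_eq, ← htree.adj_and_parent_eq_iff]
  rcases x with a | b <;> rcases y with a' | b'
  · simp only [inl_inl_notMem_auxArcs, not_sg_adj_inl_inl, false_and]
  · simp only [inl_inr_mem_auxArcs, sg_adj_inl_inr, Set.mem_sdiff, mem_parentMatching]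
    exact and_congr_right fun hT => by
      rw [htree.parent_eq_iff_parent_ne (sg_adj_inl_inr.2 hT), and_iff_right hT]
  · simp only [inr_inl_mem_auxArcs, sg_adj_inr_inl, mem_parentMatching]
  · simp only [inr_inr_notMem_auxArcs, not_sg_adj_inr_inr, false_and]

theorem isInArb_parentMatching :
    IsInArb (auxArcs (T \ parentMatching htree ρ) (parentMatching htree ρ)) ρ := by
  rw [auxArcs_parentMatching]
  exact htree.isInArb_parentArcs ρ

theorem existsUnique_mem_parentMatching_inl (r : α) (b : β) :
    ∃! a, (a, b) ∈ parentMatching htree (inl r) := by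
  have hadj := htree.adj_parent (ρ := inl r) (v := inr b) inr_ne_inl
  rcases hp : htree.parent (inl r) (inr b) with a | b'
  · rw [hp, sg_adj_inr_inl] at hadj
    exact ⟨a, ⟨hadj, hp⟩, fun a' ha' => inl_injective (ha'.2.symm.trans hp)⟩
  · rw [hp] at hadj
    exact (not_sg_adj_inr_inr hadj).elim

end ParentMatching

theorem stmt5_general {α β : Type*}
    (E T : Set (α × β)) (hTE : T ⊆ E) (htree : (sg T).IsTree) :
    (∃ M : Set (α × β), IsPerfectMatching E M ∧ M ⊆ T ∧
        auxArcs (T \ M) M ⊆ auxArcs E M ∧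
        ∃ r : α ⊕ β, IsInArb (auxArcs (T \ M) M) r) ↔
      (∃ r : α, degP T r = 1 ∧ ∀ a : α, a ≠ r → degP T a = 2) := by
  constructor
  · rintro ⟨M, ⟨-, hMl, hMr⟩, hMT, -, ρ, harb⟩
    obtain ⟨r, rfl⟩ := exists_eq_inl_of_isInArb (fun b => (hMr b).exists) harb
    exact ⟨r, (forall_existsUnique_iff_degP hMT harb).1 hMl⟩
  · rintro ⟨r, hdeg⟩
    have hMT := parentMatching_subset htree (inl r)
    have harb := isInArb_parentMatching htree (inl r)
    refine ⟨parentMatching htree (inl r), ⟨hMT.trans hTE, ?_, ?_⟩, hMT,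
      auxArcs_subset_auxArcs (Set.sdiff_subset.trans hTE), inl r, harb⟩
    · exact (forall_existsUnique_iff_degP hMT harb).2 hdeg
    · exact existsUnique_mem_parentMatching_inl htree r

theorem stmt5 {α β : Type*} [Fintype α] [Fintype β]
    (hbal : Fintype.card α = Fintype.card β)
    (E T : Set (α × β)) (hTE : T ⊆ E) (htree : (sg T).IsTree) :
    (∃ M : Set (α × β), IsPerfectMatching E M ∧ M ⊆ T ∧
        auxArcs (T \ M) M ⊆ auxArcs E M ∧
        ∃ r : α ⊕ β, IsInArb (auxArcs (T \ M) M) r) ↔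
      (∃ r : α, degP T r = 1 ∧ ∀ a : α, a ≠ r → degP T a = 2) :=
  stmt5_general E T hTE htree
end

section
/- Let T be a spanning tree of a balanced bipartite graph G = (V+, V-; E) such that some vertex r ∈ V+ has degree 1 in T and every other vertex of V+ has degree exactly 2 in T. Then T contains a perfect matching of G. -/
open Sum

open SimpleGraph Walk in
theorem stmt6 {α β : Type*} [Fintype α] [Fintype β]
    (hbal : Fintype.card α = Fintype.card β)
    (E T : Set (α × β)) (hTE : T ⊆ E) (htree : (sg T).IsTree)
    (r : α) (hr : degP T r = 1) (hdeg : ∀ a : α, a ≠ r → degP T a = 2) :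
    ∃ M : Set (α × β), M ⊆ T ∧ IsPerfectMatching E M := by
  classical
  have hacyc := htree.2
  choose pa hpa hpu using fun v => htree.existsUnique_path v (inl r)
  -- adjacency characterization
  have adjLR : ∀ (a : α) (b : β), (sg T).Adj (inl a) (inr b) ↔ (a, b) ∈ T := by
    intro a b; simp [sg, SimpleGraph.fromRel_adj]
  have adjL : ∀ (a : α) w, (sg T).Adj (inl a) w → ∃ b, w = inr b ∧ (a, b) ∈ T := by
    intro a w h
    cases w with
    | inl a' => simp [sg, SimpleGraph.fromRel_adj] at h
    | inr b => exact ⟨b, rfl, (adjLR a b).1 h⟩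
  have adjR : ∀ (b : β) w, (sg T).Adj (inr b) w → ∃ a, w = inl a ∧ (a, b) ∈ T := by
    intro b w h
    cases w with
    | inl a => exact ⟨a, rfl, (adjLR a b).1 h.symm⟩
    | inr b' => simp [sg, SimpleGraph.fromRel_adj] at h
  -- parent relation
  set Par : (α ⊕ β) → (α ⊕ β) → Prop :=
    fun u v => ∃ h : (sg T).Adj u v, pa u = Walk.cons h (pa v) with hPar
  have parLen : ∀ u v, Par u v → (pa u).length = (pa v).length + 1 := by
    rintro u v ⟨h, he⟩; rw [he, Walk.length_cons]
  have parAsym : ∀ u v, Par u v → Par v u → False := by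
    intro u v h1 h2
    have := parLen u v h1; have := parLen v u h2; omega
  have parFun : ∀ u v w, Par u v → Par u w → v = w := by
    rintro u v w ⟨h1, he1⟩ ⟨h2, he2⟩
    have : (pa u).getVert 1 = v := by rw [he1, Walk.getVert_cons_succ, Walk.getVert_zero]
    have h2' : (pa u).getVert 1 = w := by rw [he2, Walk.getVert_cons_succ, Walk.getVert_zero]
    rw [← this, h2']
  have stepIn : ∀ u v (h : (sg T).Adj v u), u ∈ (pa v).support → Par v u := by
    intro u v h hmem
    have hq : ((pa v).takeUntil u hmem).IsPath := (hpa v).takeUntil hmem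
    have hsing : ((pa v).takeUntil u hmem) = Walk.cons h Walk.nil := by
      have := hacyc.path_unique ⟨(pa v).takeUntil u hmem, hq⟩ (SimpleGraph.Path.singleton h)
      simpa [SimpleGraph.Path.singleton, Subtype.ext_iff] using this
    have hdrop : ((pa v).dropUntil u hmem).IsPath := (hpa v).dropUntil hmem
    have hdeq : (pa v).dropUntil u hmem = pa u := hpu u _ hdrop
    have hspec := (pa v).take_spec hmem
    refine ⟨h, ?_⟩
    rw [← hspec, hsing, hdeq]
    rfl
  have stepOut : ∀ u v (h : (sg T).Adj u v), u ∉ (pa v).support → Par u v := by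
    intro u v h hmem
    have : (Walk.cons h (pa v)).IsPath := (hpa v).cons hmem
    exact ⟨h, (hpu u _ this).symm⟩
  have dich : ∀ u v, (sg T).Adj u v → Par u v ∨ Par v u := by
    intro u v h
    rcases Classical.em (u ∈ (pa v).support) with hmem | hmem
    · exact Or.inr (stepIn u v h.symm hmem)
    · exact Or.inl (stepOut u v h hmem)
  have exPar : ∀ v, v ≠ inl r → ∃ u, Par v u := by
    intro v hne
    obtain ⟨x, h, q, hq⟩ := Walk.exists_eq_cons_of_ne hne (pa v)
    have hqp : q.IsPath := by
      have := hpa v; rw [hq, Walk.cons_isPath_iff] at this; exact this.1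
    exact ⟨x, h, by rw [hq, hpu x q hqp]⟩
  -- the matching
  refine ⟨{p : α × β | p ∈ T ∧ Par (inr p.2) (inl p.1)}, fun p hp => hp.1,
    fun p hp => hTE hp.1, ?_, ?_⟩
  · -- each a has a unique partner
    intro a
    by_cases ha : a = r
    · subst ha
      obtain ⟨b0, hb0⟩ := Set.ncard_eq_one.mp hr
      have hb0T : (a, b0) ∈ T := by
        have : b0 ∈ {b | (a, b) ∈ T} := hb0 ▸ rfl; exact this
      refine ⟨b0, ⟨hb0T, ?_⟩, ?_⟩
      · exact stepIn (inl a) (inr b0) ((adjLR a b0).2 hb0T).symm (pa (inr b0)).end_mem_support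
      · rintro b ⟨hbT, -⟩
        have : b ∈ ({b0} : Set β) := hb0 ▸ hbT
        exact this
    · obtain ⟨u, hu⟩ := exPar (inl a) (by simp [ha])
      obtain ⟨h1, -⟩ := id hu
      obtain ⟨b1, rfl, hb1T⟩ := adjL a u h1
      obtain ⟨c1, c2, hc, hcs⟩ := Set.ncard_eq_two.mp (hdeg a ha)
      have hmem : ∀ b, (a, b) ∈ T ↔ b = c1 ∨ b = c2 := by
        intro b
        have h0 : (a, b) ∈ T ↔ b ∈ {b | (a, b) ∈ T} := Iff.rfl
        rw [h0, hcs]; simp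
      -- b1 is one of c1 c2; let b2 be the other
      obtain ⟨b2, hb2ne, hb2T, hb2all⟩ : ∃ b2, b2 ≠ b1 ∧ (a, b2) ∈ T ∧
          ∀ b, (a, b) ∈ T → b = b1 ∨ b = b2 := by
        rcases (hmem b1).1 hb1T with h | h
        · refine ⟨c2, by rw [h]; exact hc.symm, (hmem c2).2 (Or.inr rfl), fun b hb => ?_⟩
          rcases (hmem b).1 hb with h' | h'
          exacts [Or.inl (h'.trans h.symm), Or.inr h']
        · refine ⟨c1, by rw [h]; exact hc, (hmem c1).2 (Or.inl rfl), fun b hb => ?_⟩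
          rcases (hmem b).1 hb with h' | h'
          exacts [Or.inr h', Or.inl (h'.trans h.symm)]
      have hb2Par : Par (inr b2) (inl a) := by
        rcases dich (inl a) (inr b2) ((adjLR a b2).2 hb2T) with h | h
        · exact absurd (parFun (inl a) (inr b1) (inr b2) hu h) (by simp [hb2ne.symm])
        · exact h
      refine ⟨b2, ⟨hb2T, hb2Par⟩, ?_⟩
      rintro b ⟨hbT, hbPar⟩
      rcases hb2all b hbT with rfl | rfl
      · exact absurd hu (fun h => parAsym _ _ h hbPar)
      · rfl
  · -- each b has a unique partner
    intro b
    obtain ⟨u, hu⟩ := exPar (inr b) (by simp)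
    obtain ⟨h1, -⟩ := id hu
    obtain ⟨a, rfl, haT⟩ := adjR b u h1
    refine ⟨a, ⟨haT, hu⟩, ?_⟩
    rintro a' ⟨ha'T, ha'Par⟩
    have := parFun (inr b) (inl a') (inl a) ha'Par hu
    exact inl.inj this
end

section
/- Every inclusion-wise minimal DM-irreducible spanning subgraph of a DM-irreducible balanced bipartite graph on 2n vertices (n ≥ 2 on each side) has at most 3n - 2 edges. -/
open Sum

def DMIrreducible {α β : Type*} (E : Set (α × β)) : Prop :=
  ∃ M, IsPerfectMatching E M ∧ StronglyConnected (Step E M)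

/-!
Contracting each edge `(μ b, b)` of the perfect matching `M` of `F` turns the auxiliary digraph
into a strongly connected digraph on `V+` whose arcs correspond injectively to the edges of `F`.
Such a digraph has a strongly connected spanning subdigraph `T` with at most `2(n - 1)` arcs,
namely an out-tree and an in-tree at a common root. The edges of `M` together with the edges of `F`
contracting into `T` still form a DM-irreducible graph, so by minimality they are all of `F`,
and `|F| ≤ n + 2(n - 1)`.
-/

open Relation Set

theorem Relation.ReflTransGen.exists_rel_of_mem_of_notMem {α : Type*} {r : α → α → Prop}
    {a b : α} {S : Set α} (h : ReflTransGen r a b) (ha : a ∈ S) (hb : b ∉ S) :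
    ∃ u ∈ S, ∃ v ∉ S, r u v := by
  induction h with
  | refl => exact absurd ha hb
  | @tail c b _ hcb ih =>
    by_cases hc : c ∈ S
    · exact ⟨c, hc, b, hb, hcb⟩
    · exact ih hc

section Digraph

variable {α : Type*} [Fintype α]

/-- Prim-style growth: a path from `r` into the unreached part crosses an arc leaving the
reached part, and adding that arc reaches one more vertex. -/
lemma exists_outTree {A : Set (α × α)} {r : α}
    (hr : ∀ v, ReflTransGen (fun x y => (x, y) ∈ A) r v) :
    ∃ T ⊆ A, T.ncard ≤ Fintype.card α - 1 ∧ ∀ v, ReflTransGen (fun x y => (x, y) ∈ T) r v := by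
  let reach (T : Set (α × α)) : Set α := {v | ReflTransGen (fun x y => (x, y) ∈ T) r v}
  have grow : ∀ k < Fintype.card α, ∃ T ⊆ A, T.ncard ≤ k ∧ k + 1 ≤ (reach T).ncard := by
    intro k
    induction k with
    | zero => exact fun _ => ⟨∅, empty_subset _, by simp, (ncard_pos).2 ⟨r, .refl⟩⟩
    | succ k ih =>
      intro hk
      obtain ⟨T, hTA, hTk, hreach⟩ := ih (by omega)
      by_cases hfull : reach T = univ
      · exact ⟨T, hTA, by omega, by rw [hfull, ncard_univ, Nat.card_eq_fintype_card]; omega⟩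
      obtain ⟨w, hw⟩ := (ne_univ_iff_exists_notMem _).1 hfull
      obtain ⟨u, hu, v, hv, huv⟩ := (hr w).exists_rel_of_mem_of_notMem (S := reach T) .refl hw
      have hsub : insert v (reach T) ⊆ reach (insert (u, v) T) := by
        have hmono : ∀ x, x ∈ reach T → x ∈ reach (insert (u, v) T) :=
          fun x hx => ReflTransGen.mono (fun _ _ h => mem_insert_of_mem _ h) _ _ hx
        exact insert_subset ((hmono u hu).tail (mem_insert _ _)) hmono
      refine ⟨insert (u, v) T, insert_subset huv hTA, (ncard_insert_le _ _).trans (by omega), ?_⟩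
      calc k + 1 + 1 ≤ (insert v (reach T)).ncard := by rw [ncard_insert_of_notMem hv]; omega
        _ ≤ (reach (insert (u, v) T)).ncard := ncard_le_ncard hsub
  have hpos : 0 < Fintype.card α := Fintype.card_pos_iff.2 ⟨r⟩
  obtain ⟨T, hTA, hTcard, hreach⟩ := grow (Fintype.card α - 1) (by omega)
  have hfull : reach T = univ := eq_of_subset_of_ncard_le (subset_univ _)
    (by rw [ncard_univ, Nat.card_eq_fintype_card]; omega)
  exact ⟨T, hTA, hTcard, eq_univ_iff_forall.1 hfull⟩

lemma exists_stronglyConnected_subset_ncard_le {A : Set (α × α)}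
    (hA : StronglyConnected fun x y => (x, y) ∈ A) :
    ∃ T ⊆ A, T.ncard ≤ 2 * (Fintype.card α - 1) ∧ StronglyConnected fun x y => (x, y) ∈ T := by
  obtain _ | ⟨⟨r⟩⟩ := isEmpty_or_nonempty α
  · exact ⟨∅, empty_subset _, by simp, fun u => isEmptyElim u⟩
  obtain ⟨Tout, houtA, hout, hreach_out⟩ := exists_outTree fun v => hA r v
  obtain ⟨Tin, hinA, hin, hreach_in⟩ :=
    exists_outTree (A := Prod.swap ⁻¹' A) fun v => reflTransGen_swap.2 (hA v r)
  refine ⟨Tout ∪ Prod.swap ⁻¹' Tin, union_subset houtA fun p hp => hinA hp, ?_, fun u v => ?_⟩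
  · have hswap : (Prod.swap ⁻¹' Tin).ncard = Tin.ncard :=
      ncard_preimage_of_injective_subset_range Prod.swap_injective
        (Prod.swap_surjective.range_eq ▸ subset_univ _)
    calc (Tout ∪ Prod.swap ⁻¹' Tin).ncard ≤ Tout.ncard + (Prod.swap ⁻¹' Tin).ncard :=
          ncard_union_le _ _
      _ ≤ 2 * (Fintype.card α - 1) := by omega
  · have hur : ReflTransGen (fun x y => (x, y) ∈ Tout ∪ Prod.swap ⁻¹' Tin) u r :=
      ReflTransGen.mono (fun _ _ h => Or.inr h) _ _ (reflTransGen_swap.1 (hreach_in u))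
    exact hur.trans (ReflTransGen.mono (fun _ _ h => Or.inl h) _ _ (hreach_out v))

end Digraph

section Bipartite

variable {α β : Type*}

lemma IsPerfectMatching.exists_equiv {E M : Set (α × β)} (h : IsPerfectMatching E M) :
    ∃ μ : β ≃ α, ∀ a b, (a, b) ∈ M ↔ μ b = a := by
  obtain ⟨-, hα, hβ⟩ := h
  choose m hm hm_uniq using hα
  choose μ hμ hμ_uniq using hβ
  exact ⟨⟨μ, m, fun b => (hm_uniq _ b (hμ b)).symm, fun a => (hμ_uniq _ a (hm a)).symm⟩,
    fun a b => ⟨fun hab => (hμ_uniq b a hab).symm, fun h => h ▸ hμ b⟩⟩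

lemma ncard_eq_card_of_forall_mem_iff [Fintype α] {M : Set (α × β)} {μ : β ≃ α}
    (hμ : ∀ a b, (a, b) ∈ M ↔ μ b = a) : M.ncard = Fintype.card α := by
  have hM : M = range fun a => (a, μ.symm a) := by
    ext ⟨a, b⟩
    simp [hμ, Equiv.eq_symm_apply, eq_comm]
  rw [hM, ncard_range_of_injective fun a a' h => congrArg Prod.fst h, Nat.card_eq_fintype_card]

/-- Contracting every matching edge `(μ b, b)` to the vertex `μ b`. -/
lemma stronglyConnected_step_iff {G M : Set (α × β)} {μ : β → α} (hMG : M ⊆ G)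
    (hμ : ∀ a b, (a, b) ∈ M ↔ μ b = a) :
    StronglyConnected (Step G M) ↔ StronglyConnected fun x y => (x, y) ∈ Prod.map id μ '' G := by
  have hmate : ∀ b, (μ b, b) ∈ M := fun b => (hμ _ b).2 rfl
  constructor
  · intro h x y
    refine (h (inl x) (inl y)).lift' (Sum.elim id μ) ?_
    rintro (a | b) (a' | b') hstep
    · exact hstep.elim
    · exact .single ⟨(a, b'), hstep, rfl⟩
    · exact (hμ a' b).1 hstep ▸ .refl
    · exact hstep.elim
  · intro h u v
    have hinl : ∀ x y, ReflTransGen (Step G M) (inl x) (inl y) := by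
      refine fun x y => (h x y).lift' inl ?_
      rintro _ _ ⟨⟨a, b⟩, hab, ⟨⟩⟩
      exact (ReflTransGen.single (show Step G M (inl a) (inr b) from hab)).tail (hmate b)
    have hto : ∀ w, ReflTransGen (Step G M) w (inl (Sum.elim id μ w)) := by
      rintro (a | b)
      · exact .refl
      · exact .single (hmate b)
    have hfrom : ∀ w, ReflTransGen (Step G M) (inl (Sum.elim id μ w)) w := by
      rintro (a | b)
      · exact .refl
      · exact .single (show Step G M (inl (μ b)) (inr b) from hMG (hmate b))
    exact ((hto u).trans (hinl _ _)).trans (hfrom v)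

end Bipartite

theorem stmt16_general {α β : Type*} [Fintype α]
    (F : Set (α × β)) (hF : DMIrreducible F)
    (hmin : ∀ F' : Set (α × β), F' ⊂ F → ¬ DMIrreducible F') :
    F.ncard ≤ 3 * Fintype.card α - 2 := by
  obtain ⟨M, hMatch, hconn⟩ := hF
  obtain ⟨μ, hμ⟩ := hMatch.exists_equiv
  have : Finite β := .of_equiv α μ.symm
  set κ : α × β → α × α := Prod.map id μ
  obtain ⟨T, hTF, hTcard, hTconn⟩ :=
    exists_stronglyConnected_subset_ncard_le ((stronglyConnected_step_iff hMatch.1 hμ).1 hconn)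
  set F' := M ∪ (F ∩ κ ⁻¹' T)
  have hFF' : F ⊆ F' := by
    by_contra hnot
    refine hmin F' ⟨union_subset hMatch.1 inter_subset_left, hnot⟩
      ⟨M, ⟨subset_union_left, hMatch.2⟩, (stronglyConnected_step_iff subset_union_left hμ).2 ?_⟩
    refine fun x y => ReflTransGen.mono (fun p q hpq => ?_) _ _ (hTconn x y)
    obtain ⟨e, he, hep⟩ := hTF hpq
    exact ⟨e, .inr ⟨he, show Prod.map id μ e ∈ T by rwa [hep]⟩, hep⟩
  have hM : M.ncard = Fintype.card α := ncard_eq_card_of_forall_mem_iff hμ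
  have hκT : (F ∩ κ ⁻¹' T).ncard ≤ T.ncard :=
    ncard_le_ncard_of_injOn κ (fun e he => he.2)
      ((Function.injective_id.prodMap μ.injective).injOn)
  calc F.ncard ≤ F'.ncard := ncard_le_ncard hFF'
    _ ≤ M.ncard + (F ∩ κ ⁻¹' T).ncard := ncard_union_le _ _
    _ ≤ 3 * Fintype.card α - 2 := by omega

/-- Every inclusion-wise minimal DM-irreducible spanning subgraph of a DM-irreducible
balanced bipartite graph on `2n` vertices (`n ≥ 2`) has at most `3n - 2` edges. -/
theorem stmt16 {α β : Type*} [Fintype α] [Fintype β]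
    (hbal : Fintype.card α = Fintype.card β) (hn : 2 ≤ Fintype.card α)
    (E F : Set (α × β)) (hE : DMIrreducible E)
    (hFE : F ⊆ E) (hF : DMIrreducible F)
    (hmin : ∀ F' : Set (α × β), F' ⊂ F → ¬ DMIrreducible F') :
    F.ncard ≤ 3 * Fintype.card α - 2 :=
  stmt16_general F hF hmin
end
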